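/- For every δ with 0 < δ ≤ π there exists a constant c₂ > 0 such that ∫_0^δ a·k_L(a) da ≥ c₂·ln L for every integer L > 1, where k_L(a) = sin²(La/2)/sin²(a/2). -/

import Mathlib

/-!
Since `sin (a/2) ≤ a/2`, on `(0, π]` we have `a k_L(a) ≥ 4 sin²(La/2) / a`. On the `j`-th period
`[2πj/L, 2π(j+1)/L]` of `sin²(La/2)` this is at least `4/(2π(j+1)/L)` times a function of mean `1/2`,
so the period contributes at least `2/(j+1)`; about `δL/(2π)` periods fit into `[0, δ]`, and the
harmonic sum gives the lower bound `2 log (δL/(2π)) = 2 log L - O(1)`. Near `0`, Jordan's inequality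
gives `k_L ≥ 4L²/π²` on `(0, π/L]`, so the integral is also at least the constant `2δ²/π²`. A suitable
convex combination of the two bounds is a positive multiple of `log L`.
-/

open Real

noncomputable section

/-- The Fejér-type kernel `k_L(a) = sin²(La/2)/sin²(a/2)`, with `k_L(0) = L²`. -/
def kernK (L : ℕ) (a : ℝ) : ℝ :=
  if a = 0 then (L : ℝ) ^ 2 else Real.sin ((L : ℝ) * a / 2) ^ 2 / Real.sin (a / 2) ^ 2

open MeasureTheory Set intervalIntegral

lemma abs_sin_nat_mul_le (n : ℕ) (x : ℝ) : |sin (n * x)| ≤ n * |sin x| := by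
  induction n with
  | zero => simp
  | succ n ih =>
    calc |sin ((n + 1 : ℕ) * x)| = |sin (n * x) * cos x + cos (n * x) * sin x| := by
          push_cast; rw [add_mul, one_mul, sin_add]
      _ ≤ |sin (n * x)| * |cos x| + |cos (n * x)| * |sin x| := by
          rw [← abs_mul, ← abs_mul]; exact abs_add_le _ _
      _ ≤ n * |sin x| * 1 + 1 * |sin x| := by
          gcongr
          · exact abs_cos_le_one _
          · exact abs_cos_le_one _
      _ = (n + 1 : ℕ) * |sin x| := by push_cast; ring

lemma kernK_nonneg (L : ℕ) (a : ℝ) : 0 ≤ kernK L a := by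
  unfold kernK; split <;> positivity

lemma kernK_le_sq (L : ℕ) (a : ℝ) : kernK L a ≤ L ^ 2 := by
  unfold kernK
  split
  · rfl
  · refine div_le_of_le_mul₀ (sq_nonneg _) (sq_nonneg _) ?_
    calc sin (L * a / 2) ^ 2 = |sin (L * (a / 2))| ^ 2 := by rw [sq_abs, mul_div_assoc]
      _ ≤ (L * |sin (a / 2)|) ^ 2 := by gcongr; exact abs_sin_nat_mul_le L (a / 2)
      _ = L ^ 2 * sin (a / 2) ^ 2 := by rw [mul_pow, sq_abs]

lemma measurable_kernK (L : ℕ) : Measurable (kernK L) :=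
  Measurable.ite (measurableSet_singleton 0) measurable_const (by fun_prop)

lemma intervalIntegrable_mul_kernK (L : ℕ) (u v : ℝ) :
    IntervalIntegrable (fun a => a * kernK L a) volume u v := by
  have hmajor : Continuous fun a : ℝ => a * (L : ℝ) ^ 2 := by fun_prop
  refine (hmajor.intervalIntegrable u v).mono_fun
    (measurable_id.mul (measurable_kernK L)).aestronglyMeasurable ?_
  refine Filter.Eventually.of_forall fun a => ?_
  simp only [norm_mul, norm_eq_abs, abs_of_nonneg (kernK_nonneg L a), abs_pow, Nat.abs_cast]
  exact mul_le_mul_of_nonneg_left (kernK_le_sq L a) (abs_nonneg a)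

lemma monotoneOn_integral_mul_kernK (L : ℕ) :
    MonotoneOn (fun v => ∫ a in 0..v, a * kernK L a) (Ici 0) := fun _ hu v _ huv =>
  integral_mono_interval le_rfl hu huv
    ((ae_restrict_iff' measurableSet_Ioc).2 <| Filter.Eventually.of_forall fun a ha =>
      mul_nonneg ha.1.le (kernK_nonneg L a))
    (intervalIntegrable_mul_kernK L 0 v)

lemma four_mul_sin_sq_div_le_mul_kernK (L : ℕ) {a : ℝ} (ha0 : 0 < a) (ha : a < 2 * π) :
    4 * sin (L * a / 2) ^ 2 / a ≤ a * kernK L a := by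
  have hs : 0 < sin (a / 2) := sin_pos_of_pos_of_lt_pi (by linarith) (by linarith)
  rw [kernK, if_neg ha0.ne']
  calc 4 * sin (L * a / 2) ^ 2 / a = a * (sin (L * a / 2) ^ 2 / (a / 2) ^ 2) := by
        field_simp; ring
    _ ≤ a * (sin (L * a / 2) ^ 2 / sin (a / 2) ^ 2) := by
        gcongr
        exact sin_le (by linarith)

lemma four_mul_sq_div_pi_sq_mul_le_mul_kernK (L : ℕ) {a : ℝ} (ha0 : 0 < a) (ha : a < 2 * π)
    (hLa : L * a ≤ π) : 4 * L ^ 2 / π ^ 2 * a ≤ a * kernK L a := by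
  have hsin : L * a / π ≤ sin (L * a / 2) := by
    convert mul_le_sin (x := L * a / 2) (by positivity) (by linarith) using 1
    ring
  calc 4 * L ^ 2 / π ^ 2 * a = 4 * (L * a / π) ^ 2 / a := by field_simp
    _ ≤ 4 * sin (L * a / 2) ^ 2 / a := by gcongr
    _ ≤ a * kernK L a := four_mul_sin_sq_div_le_mul_kernK L ha0 ha

lemma integral_sin_const_mul_sq_period {c : ℝ} (hc : c ≠ 0) (j : ℤ) :
    ∫ a in j * π / c..(j + 1) * π / c, sin (c * a) ^ 2 = π / (2 * c) := by
  rw [integral_comp_mul_left (fun x => sin x ^ 2) hc, integral_sin_sq]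
  have h₁ : c * (j * π / c) = j * π := mul_div_cancel₀ _ hc
  have h₂ : c * ((j + 1) * π / c) = ((j + 1 : ℤ) : ℝ) * π := by
    rw [mul_div_cancel₀ _ hc]; push_cast; ring
  rw [h₁, h₂, sin_int_mul_pi, sin_int_mul_pi, smul_eq_mul]
  push_cast
  field_simp
  ring

lemma two_div_succ_le_integral_mul_kernK {L : ℕ} (hL : 0 < L) {j : ℕ}
    (hj : 2 * π * (j + 1) / L ≤ π) :
    2 / (j + 1) ≤ ∫ a in 2 * π * j / L..2 * π * (j + 1) / L, a * kernK L a := by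
  have hL' : (L : ℝ) / 2 ≠ 0 := by positivity
  have hperiod : ∫ a in 2 * π * j / L..2 * π * (j + 1) / L, sin (L * a / 2) ^ 2 = π / L := by
    have h := integral_sin_const_mul_sq_period hL' j
    push_cast at h
    convert h using 2 <;> field_simp
  have hab : 2 * π * j / L ≤ 2 * π * (j + 1) / L := by gcongr; linarith
  set b := 2 * π * (j + 1) / L with hb_def
  calc 2 / (j + 1) = 4 / b * ∫ a in 2 * π * j / L..b, sin (L * a / 2) ^ 2 := by
        rw [hperiod, hb_def]; field_simp; ring
    _ = ∫ a in 2 * π * j / L..b, 4 / b * sin (L * a / 2) ^ 2 :=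
        (intervalIntegral.integral_const_mul _ _).symm
    _ ≤ ∫ a in 2 * π * j / L..b, a * kernK L a := by
        refine integral_mono_on_of_le_Ioo hab (Continuous.intervalIntegrable (by fun_prop) _ _)
          (intervalIntegrable_mul_kernK L _ _) fun a ha => ?_
        have ha0 : 0 < a := lt_of_le_of_lt (by positivity) ha.1
        calc 4 / b * sin (L * a / 2) ^ 2 = 4 * sin (L * a / 2) ^ 2 / b := div_mul_eq_mul_div _ _ _
          _ ≤ 4 * sin (L * a / 2) ^ 2 / a := by gcongr; exact ha.2.le
          _ ≤ a * kernK L a :=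
            four_mul_sin_sq_div_le_mul_kernK L ha0 (by linarith [ha.2, pi_pos])

lemma two_mul_log_succ_le_integral_mul_kernK {L : ℕ} (hL : 0 < L) {J : ℕ}
    (hJ : 2 * π * J / L ≤ π) :
    2 * log (J + 1) ≤ ∫ a in 0..2 * π * J / L, a * kernK L a := by
  have hharmonic := log_add_one_le_harmonic J
  push_cast [harmonic] at hharmonic
  have hsplit := sum_integral_adjacent_intervals (n := J) (a := fun k : ℕ => 2 * π * k / L)
    fun k _ => intervalIntegrable_mul_kernK L _ _
  push_cast at hsplit
  calc 2 * log (J + 1) ≤ ∑ j ∈ Finset.range J, 2 / ((j : ℝ) + 1) := by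
        simp only [div_eq_mul_inv, ← Finset.mul_sum]
        linarith
    _ ≤ ∑ j ∈ Finset.range J, ∫ a in 2 * π * j / L..2 * π * (j + 1) / L, a * kernK L a :=
        Finset.sum_le_sum fun j hj => two_div_succ_le_integral_mul_kernK hL <| hJ.trans' <| by
          gcongr; exact_mod_cast Finset.mem_range.1 hj
    _ = ∫ a in 0..2 * π * J / L, a * kernK L a := by simpa using hsplit

lemma two_mul_log_le_integral_mul_kernK {L : ℕ} (hL : 0 < L) {δ : ℝ} (hδ0 : 0 < δ)
    (hδπ : δ ≤ π) : 2 * log (δ * L / (2 * π)) ≤ ∫ a in 0..δ, a * kernK L a := by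
  set J := ⌊δ * L / (2 * π)⌋₊
  have hJ : 2 * π * J / L ≤ δ := by
    rw [div_le_iff₀ (by positivity), ← le_div_iff₀' (by positivity)]
    exact Nat.floor_le (by positivity)
  calc 2 * log (δ * L / (2 * π)) ≤ 2 * log (J + 1) := by
        gcongr
        exact (Nat.lt_floor_add_one _).le
    _ ≤ ∫ a in 0..2 * π * J / L, a * kernK L a :=
        two_mul_log_succ_le_integral_mul_kernK hL (hJ.trans hδπ)
    _ ≤ ∫ a in 0..δ, a * kernK L a :=
        monotoneOn_integral_mul_kernK L (mem_Ici.2 (by positivity)) hδ0.le hJ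

lemma two_mul_sq_div_pi_sq_le_integral_mul_kernK {L : ℕ} (hL : 1 ≤ L) {δ : ℝ} (hδ0 : 0 < δ)
    (hδπ : δ ≤ π) : 2 * δ ^ 2 / π ^ 2 ≤ ∫ a in 0..δ, a * kernK L a := by
  have hL' : (1 : ℝ) ≤ L := by exact_mod_cast hL
  set t := min δ (π / L)
  have ht0 : 0 < t := lt_min hδ0 (by positivity)
  have hLt : δ ≤ L * t := by
    rw [mul_min_of_nonneg _ _ (by positivity), mul_div_cancel₀ _ (by positivity)]
    exact le_min (le_mul_of_one_le_left hδ0.le hL') hδπ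
  calc 2 * δ ^ 2 / π ^ 2 ≤ 2 * (L * t) ^ 2 / π ^ 2 := by gcongr
    _ = ∫ a in 0..t, 4 * L ^ 2 / π ^ 2 * a := by
        rw [intervalIntegral.integral_const_mul, integral_id]; ring
    _ ≤ ∫ a in 0..t, a * kernK L a := by
        refine integral_mono_on_of_le_Ioo ht0.le (Continuous.intervalIntegrable (by fun_prop) _ _)
          (intervalIntegrable_mul_kernK L _ _) fun a ha => ?_
        have hLa : L * a ≤ π := by
          rw [← le_div_iff₀' (by positivity)]
          exact ha.2.le.trans (min_le_right _ _)
        exact four_mul_sq_div_pi_sq_mul_le_mul_kernK L ha.1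
          (by linarith [ha.2, min_le_left δ (π / L), pi_pos]) hLa
    _ ≤ ∫ a in 0..δ, a * kernK L a :=
        monotoneOn_integral_mul_kernK L (mem_Ici.2 ht0.le) (mem_Ici.2 hδ0.le) (min_le_left _ _)

/-- `m y / (m + C)` is the convex combination `C/(m+C) · m + m/(m+C) · (y - C)` of the two lower
bounds. -/
lemma div_add_mul_le_of_le_of_sub_le {m C x y : ℝ} (hm : 0 < m) (hC : 0 ≤ C) (hmx : m ≤ x)
    (hyx : y - C ≤ x) : m / (m + C) * y ≤ x := by
  rw [div_mul_eq_mul_div, div_le_iff₀ (by positivity)]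
  nlinarith [mul_le_mul_of_nonneg_left hyx hm.le, mul_le_mul_of_nonneg_left hmx hC]

/-- For every `0 < δ ≤ π` there is `c₂ > 0` with
`∫_0^δ a k_L(a) da ≥ c₂ ln L` for every integer `L > 1`. -/
theorem kernel_weighted_integral_ge_log (δ : ℝ) (hδ0 : 0 < δ) (hδπ : δ ≤ π) :
    ∃ c₂ : ℝ, 0 < c₂ ∧
      ∀ L : ℕ, 1 < L → c₂ * Real.log L ≤ ∫ a in (0 : ℝ)..δ, a * kernK L a := by
  set m := 2 * δ ^ 2 / π ^ 2
  set C := 2 * log (2 * π / δ)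
  have hm : 0 < m := by positivity
  have hC : 0 ≤ C := mul_nonneg zero_le_two (log_nonneg ((one_le_div hδ0).2 (by linarith [pi_pos])))
  refine ⟨2 * (m / (m + C)), by positivity, fun L hL => ?_⟩
  have hlog : 2 * log (δ * L / (2 * π)) = 2 * log L - C := by
    rw [show δ * L / (2 * π) = L / (2 * π / δ) by field_simp,
      log_div (by positivity) (by positivity)]
    ring
  rw [mul_comm 2, mul_assoc]
  exact div_add_mul_le_of_le_of_sub_le hm hC
    (two_mul_sq_div_pi_sq_le_integral_mul_kernK hL.le hδ0 hδπ)
    (hlog ▸ two_mul_log_le_integral_mul_kernK (by omega) hδ0 hδπ)
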